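/- Let G be a connected graph with n ≥ 2 vertices and m edges. Then the multiplicative degree-Kirchhoff index of the subdivision of G satisfies R*(S(G)) = 8·R*(G) + 2m(2m − 2n + 1). -/

import Mathlib

open BigOperators Matrix

namespace KirchhoffPaper

/-- `B` is a Moore–Penrose (pseudo)inverse of `A`. -/
def IsMoorePenrose {n : Type*} [Fintype n] [DecidableEq n] (A B : Matrix n n ℝ) : Prop :=
  A * B * A = A ∧ B * A * B = B ∧ (A * B)ᵀ = A * B ∧ (B * A)ᵀ = B * A

variable {V : Type*}

/-- The resistance distance between `i` and `j` in `G`: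
`Ω_{ij} = L⁺_{ii} + L⁺_{jj} - 2 L⁺_{ij}` with `L⁺` the Moore–Penrose inverse of the Laplacian. -/
noncomputable def resistanceDistance [Fintype V] [DecidableEq V]
    (G : SimpleGraph V) [DecidableRel G.Adj] (i j : V) : ℝ :=
  letI := Classical.propDecidable
  if h : ∃ B, IsMoorePenrose (G.lapMatrix ℝ) B then
    h.choose i i + h.choose j j - 2 * h.choose i j
  else 0

/-- Kirchhoff index `R(G) = Σ_{{i,j}⊆V} Ω_{ij}` (as half the sum over ordered pairs;
note `Ω_{ii} = 0`). -/
noncomputable def kirchhoffIndex [Fintype V] [DecidableEq V]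
    (G : SimpleGraph V) [DecidableRel G.Adj] : ℝ :=
  (1 / 2) * ∑ i, ∑ j, resistanceDistance G i j

/-- Additive degree-Kirchhoff index `R⁺(G) = Σ_{{i,j}⊆V} (d_i + d_j) Ω_{ij}`. -/
noncomputable def addDegKirchhoffIndex [Fintype V] [DecidableEq V]
    (G : SimpleGraph V) [DecidableRel G.Adj] : ℝ :=
  (1 / 2) * ∑ i, ∑ j, ((G.degree i : ℝ) + (G.degree j : ℝ)) * resistanceDistance G i j

/-- Multiplicative degree-Kirchhoff index `R*(G) = Σ_{{i,j}⊆V} d_i d_j Ω_{ij}`. -/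
noncomputable def mulDegKirchhoffIndex [Fintype V] [DecidableEq V]
    (G : SimpleGraph V) [DecidableRel G.Adj] : ℝ :=
  (1 / 2) * ∑ i, ∑ j, ((G.degree i : ℝ) * (G.degree j : ℝ)) * resistanceDistance G i j

/-- The subdivision `S(G)`: each edge of `G` is replaced by a path of length two through a
new vertex (one new vertex per edge of `G`). -/
def subdivision [DecidableEq V] (G : SimpleGraph V) : SimpleGraph (V ⊕ G.edgeSet) where
  Adj x y :=
    match x, y with
    | Sum.inl u, Sum.inr e => u ∈ (e : Sym2 V)
    | Sum.inr e, Sum.inl u => u ∈ (e : Sym2 V)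
    | _, _ => False
  symm := by constructor; rintro (u | e) (v | f) h <;> exact h
  loopless := by constructor; rintro (u | e) h <;> exact h

/-- The triangulation `T(G)`: each edge `uv` of `G` is turned into a triangle `uwv`
with `w` a new vertex associated with `uv`. -/
def triangulation [DecidableEq V] (G : SimpleGraph V) : SimpleGraph (V ⊕ G.edgeSet) where
  Adj x y :=
    match x, y with
    | Sum.inl u, Sum.inl v => G.Adj u v
    | Sum.inl u, Sum.inr e => u ∈ (e : Sym2 V)
    | Sum.inr e, Sum.inl u => u ∈ (e : Sym2 V)
    | _, _ => False
  symm := by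
    constructor
    rintro (u | e) (v | f) h
    · exact G.symm.symm _ _ h
    · exact h
    · exact h
    · exact h
  loopless := by
    constructor
    rintro (u | e) h
    · exact G.loopless.irrefl u h
    · exact h

instance [Fintype V] [DecidableEq V] (G : SimpleGraph V) [DecidableRel G.Adj] :
    DecidableRel (subdivision G).Adj := fun x y =>
  match x, y with
  | Sum.inl _, Sum.inl _ => inferInstanceAs (Decidable False)
  | Sum.inl u, Sum.inr e => inferInstanceAs (Decidable (u ∈ (e : Sym2 V)))
  | Sum.inr e, Sum.inl u => inferInstanceAs (Decidable (u ∈ (e : Sym2 V)))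
  | Sum.inr _, Sum.inr _ => inferInstanceAs (Decidable False)

instance [Fintype V] [DecidableEq V] (G : SimpleGraph V) [DecidableRel G.Adj] :
    DecidableRel (triangulation G).Adj := fun x y =>
  match x, y with
  | Sum.inl u, Sum.inl v => inferInstanceAs (Decidable (G.Adj u v))
  | Sum.inl u, Sum.inr e => inferInstanceAs (Decidable (u ∈ (e : Sym2 V)))
  | Sum.inr e, Sum.inl u => inferInstanceAs (Decidable (u ∈ (e : Sym2 V)))
  | Sum.inr _, Sum.inr _ => inferInstanceAs (Decidable False)

/-- A bundled finite simple graph (with decidable adjacency), used for iterating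
the subdivision and triangulation constructions. -/
structure FGraph where
  V : Type*
  [fV : Fintype V]
  [dV : DecidableEq V]
  G : SimpleGraph V
  [dG : DecidableRel G.Adj]

attribute [instance] FGraph.fV FGraph.dV FGraph.dG

/-- Subdivision, as an operation on bundled graphs. -/
def FGraph.subdiv (H : FGraph) : FGraph := { V := H.V ⊕ H.G.edgeSet, G := subdivision H.G }

/-- Triangulation, as an operation on bundled graphs. -/
def FGraph.triang (H : FGraph) : FGraph := { V := H.V ⊕ H.G.edgeSet, G := triangulation H.G }

/-- Kirchhoff index of a bundled graph. -/
noncomputable def FGraph.R (H : FGraph) : ℝ := kirchhoffIndex H.G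

/-- Additive degree-Kirchhoff index of a bundled graph. -/
noncomputable def FGraph.Rplus (H : FGraph) : ℝ := addDegKirchhoffIndex H.G

/-- Multiplicative degree-Kirchhoff index of a bundled graph. -/
noncomputable def FGraph.Rstar (H : FGraph) : ℝ := mulDegKirchhoffIndex H.G

/-!
Resistance distances can be read off any generalized inverse `X` of the Laplacian
(`L X L = L`), not only off `L⁺`: the vector `e_i - e_j` lies in the range of `L` when the graph
is connected, and on that range all generalized inverses give the same quadratic form. Hence
`R*(H) = (Σ d) · tr(D X) - dᵀ X d`.

With `B` the vertex–edge incidence matrix of `G`, the Laplacian of `S(G)` is the block matrix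
`[[D, -B], [-Bᵀ, 2]]`. Its Schur complement `D - B Bᵀ / 2 = (D - A) / 2` is half the Laplacian of
`G`, so a generalized inverse of `L_{S(G)}` is built from `L⁺ = (L + J/n)⁻¹ - J/n`. Both terms
of `R*(S(G))` then reduce to `tr(D L⁺)`, `dᵀ L⁺ d` and `tr(L L⁺) = n - 1`, using `B 𝟙 = d` and
`B Bᵀ = D + A`.
-/

theorem IsMoorePenrose.unique {ι : Type*} [Fintype ι] [DecidableEq ι] {A X Y : Matrix ι ι ℝ}
    (hX : IsMoorePenrose A X) (hY : IsMoorePenrose A Y) : X = Y := by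
  obtain ⟨hX₁, hX₂, hX₃, hX₄⟩ := hX
  obtain ⟨hY₁, hY₂, hY₃, hY₄⟩ := hY
  have hAX : A * X = A * Y :=
    calc A * X = (A * Y * A) * X := by rw [hY₁]
      _ = ((A * X) * (A * Y))ᵀ := by rw [transpose_mul, hX₃, hY₃, Matrix.mul_assoc]
      _ = A * Y := by rw [← Matrix.mul_assoc, hX₁, hY₃]
  have hXA : X * A = Y * A :=
    calc X * A = X * (A * Y * A) := by rw [hY₁]
      _ = ((Y * A) * (X * A))ᵀ := by
        rw [transpose_mul, hX₄, hY₄, Matrix.mul_assoc, Matrix.mul_assoc]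
      _ = Y * A := by rw [Matrix.mul_assoc, ← Matrix.mul_assoc A, hX₁, hY₄]
  calc X = X * A * X := hX₂.symm
    _ = Y * A * Y := by rw [Matrix.mul_assoc, hAX, ← Matrix.mul_assoc, hXA]
    _ = Y := hY₂

theorem dotProduct_mulVec_eq_of_mul_mul_eq_self {ι : Type*} [Fintype ι] {L X : Matrix ι ι ℝ}
    (hL : Lᵀ = L) (hX : L * X * L = L) (w : ι → ℝ) :
    (L *ᵥ w) ⬝ᵥ (X *ᵥ (L *ᵥ w)) = w ⬝ᵥ (L *ᵥ w) := by
  have hLw : L *ᵥ w = w ᵥ* L := by rw [← vecMul_transpose, hL]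
  rw [hLw, ← dotProduct_mulVec, ← hLw, mulVec_mulVec, mulVec_mulVec, hX]

theorem fromBlocks_mul_mul_self_of_schur {l m α : Type*} [Fintype l] [Fintype m] [DecidableEq m]
    [Ring α] {A : Matrix l l α} {B : Matrix l m α} {C : Matrix m l α} {D D' : Matrix m m α}
    {T : Matrix l l α} (hD : D * D' = 1) (hD' : D' * D = 1)
    (hT : (A - B * D' * C) * T * (A - B * D' * C) = A - B * D' * C) :
    fromBlocks A B C D * fromBlocks T (-(T * B * D')) (-(D' * C * T)) (D' + D' * C * T * B * D') *
      fromBlocks A B C D = fromBlocks A B C D := by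
  set S := A - B * D' * C with hS
  have hMX : fromBlocks A B C D * fromBlocks T (-(T * B * D')) (-(D' * C * T))
      (D' + D' * C * T * B * D') = fromBlocks (S * T) (B * D' - S * T * B * D') 0 1 := by
    rw [fromBlocks_multiply, fromBlocks_inj]
    refine ⟨?_, ?_, ?_, ?_⟩
    · simp only [hS, Matrix.sub_mul, Matrix.mul_neg, Matrix.mul_assoc]; abel
    · simp only [hS, Matrix.sub_mul, Matrix.mul_neg, Matrix.mul_add, Matrix.mul_assoc]; abel
    · simp only [Matrix.mul_neg, ← Matrix.mul_assoc, hD, Matrix.one_mul]; abel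
    · simp only [Matrix.mul_neg, Matrix.mul_add, ← Matrix.mul_assoc, hD, Matrix.one_mul]; abel
  rw [hMX, fromBlocks_multiply, fromBlocks_inj]
  refine ⟨?_, ?_, by simp, by simp⟩
  · calc S * T * A + (B * D' - S * T * B * D') * C = S * T * S + B * D' * C := by
          simp only [hS, Matrix.mul_sub, Matrix.sub_mul, Matrix.mul_assoc]; abel
      _ = A := by rw [hT, hS, sub_add_cancel]
  · simp only [Matrix.sub_mul, Matrix.mul_assoc, hD', Matrix.mul_one]; abel

theorem trace_fromBlocks {l m α : Type*} [Fintype l] [Fintype m] [AddCommMonoid α]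
    (A : Matrix l l α) (B : Matrix l m α) (C : Matrix m l α) (D : Matrix m m α) :
    (fromBlocks A B C D).trace = A.trace + D.trace := by
  simp [trace, Fintype.sum_sum_type]

section Laplacian

variable {W : Type*} [Fintype W]

noncomputable def constProj (W : Type*) [Fintype W] : Matrix W W ℝ :=
  (Fintype.card W : ℝ)⁻¹ • of fun _ _ => 1

theorem constProj_mulVec (x : W → ℝ) :
    constProj W *ᵥ x = fun _ => (Fintype.card W : ℝ)⁻¹ * ∑ i, x i := by
  ext; simp [constProj, mulVec, dotProduct, Finset.mul_sum]

theorem constProj_transpose : (constProj W)ᵀ = constProj W := by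
  ext; simp [constProj]

theorem constProj_mul_self [Nonempty W] : constProj W * constProj W = constProj W := by
  ext; simp [constProj, mul_apply]

variable [DecidableEq W] (H : SimpleGraph W) [DecidableRel H.Adj]

theorem lapMatrix_mul_constProj : H.lapMatrix ℝ * constProj W = 0 := by
  ext i j
  have hrow : ∑ k, H.lapMatrix ℝ i k = 0 := by
    simpa [mulVec, dotProduct] using congrFun (H.lapMatrix_mulVec_const_eq_zero (R := ℝ)) i
  simp [constProj, mul_apply, ← Finset.sum_mul, hrow]

theorem constProj_mul_lapMatrix : constProj W * H.lapMatrix ℝ = 0 := by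
  rw [← transpose_transpose (constProj W * _), transpose_mul, constProj_transpose,
    (H.isSymm_lapMatrix (R := ℝ)).eq, lapMatrix_mul_constProj, transpose_zero]

variable {H}

theorem isUnit_det_lapMatrix_add_constProj (hH : H.Connected) :
    IsUnit (H.lapMatrix ℝ + constProj W).det := by
  have := hH.nonempty
  rw [isUnit_iff_ne_zero, ne_eq, ← exists_mulVec_eq_zero_iff]
  rintro ⟨x, hx0, hx⟩
  have hproj : constProj W *ᵥ x = 0 := by
    simpa [mulVec_mulVec, Matrix.mul_add, constProj_mul_lapMatrix, constProj_mul_self] using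
      congrArg (constProj W *ᵥ ·) hx
  have hconst : ∀ i j, x i = x j := by
    have hL : H.lapMatrix ℝ *ᵥ x = 0 := by simpa [add_mulVec, hproj] using hx
    exact fun i j =>
      H.lapMatrix_mulVec_eq_zero_iff_forall_reachable.1 hL i j (hH.preconnected i j)
  refine hx0 (funext fun i => ?_)
  have := congrFun hproj i
  simp only [constProj_mulVec, Finset.sum_congr rfl fun j _ => hconst j i, Finset.sum_const,
    Finset.card_univ, nsmul_eq_mul, Pi.zero_apply] at this
  simpa [Fintype.card_ne_zero] using this

variable (H)

noncomputable def lapPinv : Matrix W W ℝ := (H.lapMatrix ℝ + constProj W)⁻¹ - constProj W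

variable {H}

theorem constProj_mul_inv_lapMatrix_add_constProj (hH : H.Connected) :
    constProj W * (H.lapMatrix ℝ + constProj W)⁻¹ = constProj W := by
  have := hH.nonempty
  have hfix : constProj W * (H.lapMatrix ℝ + constProj W) = constProj W := by
    rw [Matrix.mul_add, constProj_mul_lapMatrix, zero_add, constProj_mul_self]
  calc constProj W * (H.lapMatrix ℝ + constProj W)⁻¹
      = constProj W * (H.lapMatrix ℝ + constProj W) * (H.lapMatrix ℝ + constProj W)⁻¹ := by
        rw [hfix]
    _ = constProj W := mul_nonsing_inv_cancel_right _ _ (isUnit_det_lapMatrix_add_constProj hH)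

theorem lapMatrix_mul_lapPinv (hH : H.Connected) :
    H.lapMatrix ℝ * lapPinv H = 1 - constProj W :=
  calc H.lapMatrix ℝ * lapPinv H = H.lapMatrix ℝ * (H.lapMatrix ℝ + constProj W)⁻¹ := by
        rw [lapPinv, Matrix.mul_sub, lapMatrix_mul_constProj, sub_zero]
    _ = (H.lapMatrix ℝ + constProj W - constProj W) * (H.lapMatrix ℝ + constProj W)⁻¹ := by
        rw [add_sub_cancel_right]
    _ = 1 - constProj W := by
        rw [Matrix.sub_mul, mul_nonsing_inv _ (isUnit_det_lapMatrix_add_constProj hH),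
          constProj_mul_inv_lapMatrix_add_constProj hH]

theorem lapPinv_transpose : (lapPinv H)ᵀ = lapPinv H := by
  rw [lapPinv, transpose_sub, transpose_nonsing_inv, transpose_add,
    (H.isSymm_lapMatrix (R := ℝ)).eq, constProj_transpose]

theorem lapPinv_mul_lapMatrix (hH : H.Connected) :
    lapPinv H * H.lapMatrix ℝ = 1 - constProj W := by
  rw [← lapPinv_transpose, ← (H.isSymm_lapMatrix (R := ℝ)).eq, ← transpose_mul,
    lapMatrix_mul_lapPinv hH, transpose_sub, transpose_one, constProj_transpose]

theorem constProj_mul_lapPinv (hH : H.Connected) : constProj W * lapPinv H = 0 := by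
  have := hH.nonempty
  rw [lapPinv, Matrix.mul_sub, constProj_mul_inv_lapMatrix_add_constProj hH, constProj_mul_self,
    sub_self]

theorem trace_lapMatrix_mul_lapPinv (hH : H.Connected) :
    (H.lapMatrix ℝ * lapPinv H).trace = Fintype.card W - 1 := by
  have := hH.nonempty
  rw [lapMatrix_mul_lapPinv hH, trace_sub, trace_one]
  simp [constProj, trace]

theorem isMoorePenrose_lapPinv (hH : H.Connected) :
    IsMoorePenrose (H.lapMatrix ℝ) (lapPinv H) := by
  refine ⟨?_, ?_, ?_, ?_⟩
  · rw [lapMatrix_mul_lapPinv hH, Matrix.sub_mul, Matrix.one_mul, constProj_mul_lapMatrix,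
      sub_zero]
  · rw [lapPinv_mul_lapMatrix hH, Matrix.sub_mul, Matrix.one_mul, constProj_mul_lapPinv hH,
      sub_zero]
  · rw [lapMatrix_mul_lapPinv hH, transpose_sub, transpose_one, constProj_transpose]
  · rw [lapPinv_mul_lapMatrix hH, transpose_sub, transpose_one, constProj_transpose]

end Laplacian

section Resistance

variable {W : Type*} [Fintype W] [DecidableEq W] {H : SimpleGraph W} [DecidableRel H.Adj]

theorem resistanceDistance_eq_of_isMoorePenrose {P : Matrix W W ℝ}
    (hP : IsMoorePenrose (H.lapMatrix ℝ) P) (i j : W) :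
    resistanceDistance H i j = P i i + P j j - 2 * P i j := by
  -- `resistanceDistance` builds its Laplacian with classical decidability instances.
  obtain rfl : ‹DecidableEq W› = fun a b => Classical.propDecidable (a = b) :=
    Subsingleton.elim _ _
  obtain rfl : ‹DecidableRel H.Adj› = fun a b => Classical.propDecidable (H.Adj a b) :=
    Subsingleton.elim _ _
  classical
  unfold resistanceDistance
  split_ifs with h
  · rw [IsMoorePenrose.unique h.choose_spec (by convert hP)]
  · exact absurd ⟨P, by convert hP⟩ h

theorem resistanceDistance_eq_of_lapMatrix_mul_mul_eq (hH : H.Connected) {X : Matrix W W ℝ}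
    (hX : H.lapMatrix ℝ * X * H.lapMatrix ℝ = H.lapMatrix ℝ) (i j : W) :
    resistanceDistance H i j = X i i + X j j - X i j - X j i := by
  set p : W → ℝ := Pi.single i 1 - Pi.single j 1
  have hquad (M : Matrix W W ℝ) : p ⬝ᵥ (M *ᵥ p) = M i i + M j j - M i j - M j i := by
    simp only [p, mulVec_sub, mulVec_single, MulOpposite.op_one, one_smul, dotProduct_sub,
      sub_dotProduct, single_dotProduct, col_apply, one_mul]
    ring
  have hp : H.lapMatrix ℝ *ᵥ (lapPinv H *ᵥ p) = p := by
    rw [mulVec_mulVec, lapMatrix_mul_lapPinv hH, sub_mulVec, one_mulVec, constProj_mulVec]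
    ext; simp [p]
  have hform (Y : Matrix W W ℝ) (hY : H.lapMatrix ℝ * Y * H.lapMatrix ℝ = H.lapMatrix ℝ) :
      p ⬝ᵥ (Y *ᵥ p) = lapPinv H *ᵥ p ⬝ᵥ (H.lapMatrix ℝ *ᵥ (lapPinv H *ᵥ p)) := by
    simpa only [hp] using dotProduct_mulVec_eq_of_mul_mul_eq_self
      (H.isSymm_lapMatrix (R := ℝ)).eq hY (lapPinv H *ᵥ p)
  have hsymm : lapPinv H j i = lapPinv H i j := congrFun (congrFun lapPinv_transpose i) j
  rw [resistanceDistance_eq_of_isMoorePenrose (isMoorePenrose_lapPinv hH), ← hquad,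
    hform X hX, ← hform _ (isMoorePenrose_lapPinv hH).1, hquad, hsymm]
  ring

theorem mulDegKirchhoffIndex_eq_of_lapMatrix_mul_mul_eq (hH : H.Connected) {X : Matrix W W ℝ}
    (hX : H.lapMatrix ℝ * X * H.lapMatrix ℝ = H.lapMatrix ℝ) :
    mulDegKirchhoffIndex H = (∑ i, (H.degree i : ℝ)) * (H.degMatrix ℝ * X).trace
      - (fun i => (H.degree i : ℝ)) ⬝ᵥ (X *ᵥ fun i => (H.degree i : ℝ)) := by
  simp only [mulDegKirchhoffIndex, resistanceDistance_eq_of_lapMatrix_mul_mul_eq hH hX, trace,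
    diag, SimpleGraph.degMatrix, diagonal_mul, dotProduct, mulVec, mul_sub, mul_add,
    Finset.sum_sub_distrib, Finset.sum_add_distrib, Finset.mul_sum, Finset.sum_mul]
  rw [Finset.sum_comm (f := fun x i => 1 / 2 * ((H.degree x : ℝ) * H.degree i * X i i)),
    Finset.sum_comm (f := fun x i => 1 / 2 * ((H.degree x : ℝ) * H.degree i * X i x))]
  simp only [← Finset.sum_add_distrib, ← Finset.sum_sub_distrib]
  exact Finset.sum_congr rfl fun _ _ => Finset.sum_congr rfl fun _ _ => by ring

end Resistance

theorem sum_edgeSet_eq_sum [Fintype V] (G : SimpleGraph V) [DecidableRel G.Adj]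
    {f : Sym2 V → ℝ} (hf : ∀ e ∉ G.edgeSet, f e = 0) : ∑ e : G.edgeSet, f e = ∑ e, f e := by
  rw [Finset.sum_set_coe (s := G.edgeSet)]
  exact Finset.sum_subset (Finset.subset_univ _) fun e _ he => hf e (by simpa using he)

section Subdivision

variable [DecidableEq V] (G : SimpleGraph V)

theorem connected_subdivision (hG : G.Connected) : (subdivision G).Connected := by
  have hinl {u v : V} (h : G.Reachable u v) : (subdivision G).Reachable (.inl u) (.inl v) := by
    obtain ⟨p⟩ := h
    induction p with
    | nil => rfl
    | @cons a b _ hab _ ih =>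
      let e : G.edgeSet := ⟨s(a, b), hab⟩
      exact (SimpleGraph.Adj.reachable (v := .inr e) (Sym2.mem_mk_left a b)).trans
        ((SimpleGraph.Adj.reachable (Sym2.mem_mk_right a b)).trans ih)
  have hend (x : V ⊕ G.edgeSet) : ∃ v, (subdivision G).Reachable (.inl v) x := by
    rcases x with v | ⟨e, he⟩
    · exact ⟨v, .rfl⟩
    · induction e using Sym2.ind with
      | _ a b => exact ⟨a, SimpleGraph.Adj.reachable (Sym2.mem_mk_left a b)⟩
  have := hG.nonempty
  refine SimpleGraph.connected_iff _ |>.2 ⟨fun x y => ?_, inferInstance⟩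
  obtain ⟨u, hu⟩ := hend x
  obtain ⟨v, hv⟩ := hend y
  exact hu.symm.trans ((hinl (hG.preconnected u v)).trans hv)

variable [Fintype V] [DecidableRel G.Adj]

noncomputable def edgeIncMatrix : Matrix V G.edgeSet ℝ := (G.incMatrix ℝ).submatrix id (↑)

theorem sum_edgeIncMatrix_apply (v : V) : ∑ e, edgeIncMatrix G v e = G.degree v := by
  rw [← G.sum_incMatrix_apply (R := ℝ)]
  exact sum_edgeSet_eq_sum G fun e he => G.incMatrix_of_notMem_incidenceSet fun h => he h.1

theorem sum_edgeIncMatrix_apply_eq_two (e : G.edgeSet) : ∑ v, edgeIncMatrix G v e = 2 :=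
  G.sum_incMatrix_apply_of_mem_edgeSet e.2

theorem edgeIncMatrix_mul_transpose :
    edgeIncMatrix G * (edgeIncMatrix G)ᵀ = G.degMatrix ℝ + G.adjMatrix ℝ := by
  have hinc : G.incMatrix ℝ * (G.incMatrix ℝ)ᵀ = G.degMatrix ℝ + G.adjMatrix ℝ := by
    rw [SimpleGraph.incMatrix_mul_transpose]
    ext u v
    by_cases huv : u = v
    · subst huv; simp [SimpleGraph.degMatrix]
    · simp [SimpleGraph.degMatrix, huv]
  rw [← hinc]
  ext u v
  simp only [mul_apply, transpose_apply]
  refine sum_edgeSet_eq_sum G (f := fun e => G.incMatrix ℝ u e * G.incMatrix ℝ v e)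
    fun e he => ?_
  rw [G.incMatrix_of_notMem_incidenceSet fun h => he h.1, zero_mul]

theorem adjMatrix_subdivision :
    (subdivision G).adjMatrix ℝ = fromBlocks 0 (edgeIncMatrix G) (edgeIncMatrix G)ᵀ 0 := by
  ext (u | e) (v | f) <;> rw [SimpleGraph.adjMatrix_apply] <;>
    simp [edgeIncMatrix, SimpleGraph.incMatrix_apply', SimpleGraph.incidenceSet, subdivision] <;>
    congr

theorem degree_subdivision :
    (fun x => ((subdivision G).degree x : ℝ)) =
      Sum.elim (fun v => (G.degree v : ℝ)) fun _ => 2 := by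
  ext x
  have h := (subdivision G).adjMatrix_mulVec_const_apply (α := ℝ) (a := 1) (v := x)
  rw [mul_one, adjMatrix_subdivision, fromBlocks_mulVec] at h
  rcases x with v | e
  · simpa [mulVec, dotProduct, sum_edgeIncMatrix_apply] using h.symm
  · simpa [mulVec, dotProduct, sum_edgeIncMatrix_apply_eq_two] using h.symm

theorem degMatrix_subdivision :
    (subdivision G).degMatrix ℝ = fromBlocks (G.degMatrix ℝ) 0 0 ((2 : ℝ) • 1) := by
  rw [SimpleGraph.degMatrix, degree_subdivision, smul_one_eq_diagonal, ← fromBlocks_diagonal]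
  rfl

theorem lapMatrix_subdivision :
    (subdivision G).lapMatrix ℝ =
      fromBlocks (G.degMatrix ℝ) (-edgeIncMatrix G) (-(edgeIncMatrix G)ᵀ) ((2 : ℝ) • 1) := by
  rw [SimpleGraph.lapMatrix, degMatrix_subdivision, adjMatrix_subdivision, sub_eq_add_neg,
    fromBlocks_neg, fromBlocks_add]
  simp

/-- The Schur-complement generalized inverse of the block matrix `lapMatrix_subdivision`, built
from a generalized inverse `P` of `G.lapMatrix ℝ`. -/
noncomputable def subdivisionGInv (P : Matrix V V ℝ) :
    Matrix (V ⊕ G.edgeSet) (V ⊕ G.edgeSet) ℝ :=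
  fromBlocks ((2 : ℝ) • P) (P * edgeIncMatrix G) ((edgeIncMatrix G)ᵀ * P)
    ((2⁻¹ : ℝ) • (1 + (edgeIncMatrix G)ᵀ * P * edgeIncMatrix G))

variable {G}

theorem lapMatrix_subdivision_mul_subdivisionGInv_mul {P : Matrix V V ℝ}
    (hP : G.lapMatrix ℝ * P * G.lapMatrix ℝ = G.lapMatrix ℝ) :
    (subdivision G).lapMatrix ℝ * subdivisionGInv G P * (subdivision G).lapMatrix ℝ =
      (subdivision G).lapMatrix ℝ := by
  have hschur : G.degMatrix ℝ -
      -edgeIncMatrix G * ((2⁻¹ : ℝ) • (1 : Matrix G.edgeSet G.edgeSet ℝ)) *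
        -(edgeIncMatrix G)ᵀ = (2⁻¹ : ℝ) • G.lapMatrix ℝ := by
    simp only [Matrix.neg_mul, Matrix.mul_neg, Matrix.mul_smul, Matrix.smul_mul,
      Matrix.mul_one, edgeIncMatrix_mul_transpose, SimpleGraph.lapMatrix]
    module
  have hT : (2⁻¹ : ℝ) • G.lapMatrix ℝ * ((2 : ℝ) • P) * ((2⁻¹ : ℝ) • G.lapMatrix ℝ) =
      (2⁻¹ : ℝ) • G.lapMatrix ℝ := by
    simp only [Matrix.mul_smul, Matrix.smul_mul, smul_smul, hP]
    norm_num
  have hD : (2 : ℝ) • (1 : Matrix G.edgeSet G.edgeSet ℝ) * ((2⁻¹ : ℝ) • 1) = 1 := by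
    rw [Matrix.smul_mul, Matrix.mul_smul, Matrix.mul_one, smul_smul]; norm_num
  have hD' : (2⁻¹ : ℝ) • (1 : Matrix G.edgeSet G.edgeSet ℝ) * ((2 : ℝ) • 1) = 1 := by
    rw [Matrix.smul_mul, Matrix.mul_smul, Matrix.mul_one, smul_smul]; norm_num
  rw [lapMatrix_subdivision]
  convert fromBlocks_mul_mul_self_of_schur hD hD' (hschur ▸ hT) using 3
  rw [subdivisionGInv, fromBlocks_inj]
  refine ⟨rfl, ?_, ?_, ?_⟩ <;>
    simp only [Matrix.neg_mul, Matrix.mul_neg, Matrix.mul_smul, Matrix.smul_mul,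
      Matrix.mul_one, Matrix.one_mul, Matrix.mul_assoc] <;> module

theorem trace_degMatrix_subdivision_mul_subdivisionGInv (P : Matrix V V ℝ) :
    ((subdivision G).degMatrix ℝ * subdivisionGInv G P).trace =
      4 * (G.degMatrix ℝ * P).trace - (G.lapMatrix ℝ * P).trace + Fintype.card G.edgeSet := by
  have hBPB : ((edgeIncMatrix G)ᵀ * P * edgeIncMatrix G).trace =
      2 * (G.degMatrix ℝ * P).trace - (G.lapMatrix ℝ * P).trace := by
    rw [trace_mul_comm, ← Matrix.mul_assoc, edgeIncMatrix_mul_transpose, SimpleGraph.lapMatrix,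
      Matrix.add_mul, Matrix.sub_mul, trace_add, trace_sub]
    ring
  rw [degMatrix_subdivision, subdivisionGInv, fromBlocks_multiply, trace_fromBlocks]
  simp only [Matrix.zero_mul, add_zero, zero_add, Matrix.mul_smul, Matrix.smul_mul,
    Matrix.one_mul, smul_smul, trace_smul, trace_add, trace_one, hBPB, smul_eq_mul]
  ring

theorem degree_dotProduct_subdivisionGInv_mulVec (P : Matrix V V ℝ) :
    (fun x => ((subdivision G).degree x : ℝ)) ⬝ᵥ
        (subdivisionGInv G P *ᵥ fun x => ((subdivision G).degree x : ℝ)) =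
      8 * ((fun v => (G.degree v : ℝ)) ⬝ᵥ (P *ᵥ fun v => (G.degree v : ℝ))) +
        2 * Fintype.card G.edgeSet := by
  have hB : edgeIncMatrix G *ᵥ 1 = fun v => (G.degree v : ℝ) := by
    ext v; simp [mulVec, dotProduct_one, sum_edgeIncMatrix_apply]
  have hBt (w : V → ℝ) :
      1 ⬝ᵥ ((edgeIncMatrix G)ᵀ *ᵥ w) = (fun v => (G.degree v : ℝ)) ⬝ᵥ w := by
    rw [dotProduct_mulVec, vecMul_transpose, hB]
  have htwo : (fun _ : G.edgeSet => (2 : ℝ)) = (2 : ℝ) • 1 := by ext; simp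
  rw [degree_subdivision, subdivisionGInv, fromBlocks_mulVec, sumElim_dotProduct_sumElim, htwo]
  simp only [Sum.elim_comp_inl, Sum.elim_comp_inr, ← mulVec_mulVec, smul_mulVec, mulVec_smul,
    add_mulVec, one_mulVec, hB, dotProduct_add, dotProduct_smul, smul_dotProduct, hBt,
    one_dotProduct_one, smul_eq_mul]
  ring

end Subdivision

theorem statement_2_general {V : Type*} [Fintype V] [DecidableEq V]
    (G : SimpleGraph V) [DecidableRel G.Adj] (n m : ℕ)
    (hn : Fintype.card V = n) (hm : G.edgeFinset.card = m)
    (hconn : G.Connected) :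
    mulDegKirchhoffIndex (subdivision G) =
      8 * mulDegKirchhoffIndex G + 2 * m * (2 * (m : ℝ) - 2 * n + 1) := by
  have hP := (isMoorePenrose_lapPinv hconn).1
  have hedges : Fintype.card G.edgeSet = m := by rw [← G.edgeFinset_card, hm]
  have hsum : ∑ v, (G.degree v : ℝ) = 2 * m := by
    have := G.sum_degrees_eq_twice_card_edges
    rw [hm] at this
    exact_mod_cast this
  have hsumS : ∑ x, ((subdivision G).degree x : ℝ) = 4 * m := by
    simp only [fun x => congrFun (degree_subdivision G) x, Fintype.sum_sum_type, Sum.elim_inl,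
      Sum.elim_inr, hsum, Finset.sum_const, Finset.card_univ, hedges, nsmul_eq_mul]
    ring
  rw [mulDegKirchhoffIndex_eq_of_lapMatrix_mul_mul_eq (connected_subdivision G hconn)
      (lapMatrix_subdivision_mul_subdivisionGInv_mul hP),
    mulDegKirchhoffIndex_eq_of_lapMatrix_mul_mul_eq hconn hP,
    trace_degMatrix_subdivision_mul_subdivisionGInv, degree_dotProduct_subdivisionGInv_mulVec,
    trace_lapMatrix_mul_lapPinv hconn, hsumS, hsum, hn, hedges]
  ring

theorem statement_2 {V : Type*} [Fintype V] [DecidableEq V]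
    (G : SimpleGraph V) [DecidableRel G.Adj] (n m : ℕ)
    (hn : Fintype.card V = n) (hm : G.edgeFinset.card = m)
    (hconn : G.Connected) (hn2 : 2 ≤ n) :
    mulDegKirchhoffIndex (subdivision G) =
      8 * mulDegKirchhoffIndex G + 2 * m * (2 * (m : ℝ) - 2 * n + 1) :=
  statement_2_general G n m hn hm hconn

end KirchhoffPaper
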